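/- arXiv:1806.04886 — 3 statements merged into one kernel-verified Lean document; each statement's English description precedes it below -/
import Mathlib

section
/- Let f ∈ C¹([1,T]) attain its maximum over [1,T] at a point t₀ ∈ (1,T]. Then for any 0 < α < 1, the Hadamard-type (Caputo–Hadamard) fractional derivative satisfies D_*^α f(t₀) ≥ (log t₀)^{-α}/Γ(1-α) · (f(t₀) - f(1)) ≥ 0. -/
/-!
Write `w s = (log (t₀ / s)) ^ (-α)`, an increasing weight on `[1, t₀)`, and split
`∫ w f' = w 1 (f t₀ - f 1) + ∫ (w - w 1) f'`. Integrating the last integral by parts against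
`f - f t₀ ≤ 0` on `[1, c]` leaves the boundary term `(w c - w 1) (f c - f t₀)` plus a nonnegative
integral, because `w' ≥ 0`. As `c → t₀` the boundary term vanishes: `w c = O((t₀ - c) ^ (-α))`
while `f c - f t₀ = O(t₀ - c)` for the Lipschitz function `f`, and `α < 1`.
-/

open Real MeasureTheory Set

/-- Caputo–Hadamard fractional derivative of order `α` with base point `1`. -/
noncomputable def caputoHadamard (α : ℝ) (f : ℝ → ℝ) (t : ℝ) : ℝ :=
  (1 / Real.Gamma (1 - α)) * ∫ s in (1:ℝ)..t, (Real.log (t / s)) ^ (-α) * deriv f s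

open Filter Topology

section IntervalIntegral

variable {a b : ℝ}

theorem intervalIntegrable_of_abs_le {g M : ℝ → ℝ} (hab : a ≤ b)
    (hM : IntervalIntegrable M volume a b) (hg : AEStronglyMeasurable g (volume.restrict (Ioo a b)))
    (hgM : ∀ x ∈ Ioo a b, |g x| ≤ M x) : IntervalIntegrable g volume a b := by
  rw [intervalIntegrable_iff_integrableOn_Ioo_of_le hab] at hM ⊢
  exact hM.mono' hg ((ae_restrict_iff' measurableSet_Ioo).2 (.of_forall hgM))

theorem mul_le_integral_mul_deriv_of_nonpos {u u' v v' : ℝ → ℝ} (hab : a ≤ b)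
    (hu : ContinuousOn u (Icc a b)) (hv : ContinuousOn v (Icc a b))
    (huu' : ∀ x ∈ Ioo a b, HasDerivAt u (u' x) x) (hvv' : ∀ x ∈ Ioo a b, HasDerivAt v (v' x) x)
    (hu' : IntervalIntegrable u' volume a b) (hv' : IntervalIntegrable v' volume a b)
    (hu'_nonneg : ∀ x ∈ Icc a b, 0 ≤ u' x) (hua : u a = 0) (hv_nonpos : ∀ x ∈ Icc a b, v x ≤ 0) :
    u b * v b ≤ ∫ x in a..b, u x * v' x := by
  rw [← uIcc_of_le hab] at hu hv
  rw [intervalIntegral.integral_mul_deriv_eq_deriv_mul_of_hasDerivAt hu hv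
    (by simpa [hab] using huu') (by simpa [hab] using hvv') hu' hv', hua, zero_mul, sub_zero,
    le_sub_self_iff]
  have : 0 ≤ ∫ x in a..b, -(u' x * v x) := intervalIntegral.integral_nonneg hab fun x hx ↦
    neg_nonneg.2 (mul_nonpos_of_nonneg_of_nonpos (hu'_nonneg x hx) (hv_nonpos x hx))
  rwa [intervalIntegral.integral_neg, neg_nonneg] at this

theorem mul_sub_le_integral_mul_deriv_of_isMaxOn {w w' f f' : ℝ → ℝ} (hab : a < b)
    (hw : ∀ x ∈ Ico a b, HasDerivAt w (w' x) x) (hw'c : ContinuousOn w' (Ico a b))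
    (hw'_nonneg : ∀ x ∈ Ico a b, 0 ≤ w' x)
    (hfc : ContinuousOn f (Icc a b)) (hf : ∀ x ∈ Ioo a b, HasDerivAt f (f' x) x)
    (hf' : IntervalIntegrable f' volume a b)
    (hwf' : IntervalIntegrable (fun x ↦ w x * f' x) volume a b)
    (hmax : IsMaxOn f (Icc a b) b)
    (hlim : Tendsto (fun x ↦ w x * (f x - f b)) (𝓝[<] b) (𝓝 0)) :
    w a * (f b - f a) ≤ ∫ x in a..b, w x * f' x := by
  have hpartial : ∀ c ∈ Ioo a b,
      (w c - w a) * (f c - f b) ≤ ∫ x in a..c, (w x - w a) * f' x := by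
    intro c hc
    have hsub : Icc a c ⊆ Ico a b := Icc_subset_Ico_right hc.2
    refine mul_le_integral_mul_deriv_of_nonpos (u' := w') hc.1.le
      (fun x hx ↦ ((hw x (hsub hx)).continuousAt.sub continuousAt_const).continuousWithinAt)
      ((hfc.mono (Icc_subset_Icc_right hc.2.le)).sub continuousOn_const)
      (fun x hx ↦ (hw x (hsub (Ioo_subset_Icc_self hx))).sub_const _)
      (fun x hx ↦ (hf x ⟨hx.1, hx.2.trans hc.2⟩).sub_const _)
      ((hw'c.mono hsub).intervalIntegrable_of_Icc hc.1.le)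
      (hf'.mono_set (uIcc_subset_uIcc_left (by simp [uIcc_of_le, hab.le, hc.1.le, hc.2.le])))
      (fun x hx ↦ hw'_nonneg x (hsub hx)) (sub_self _)
      (fun x hx ↦ sub_nonpos.2 (hmax ⟨hx.1, hx.2.trans hc.2.le⟩))
  have hf_lim : Tendsto (fun x ↦ f x - f b) (𝓝[<] b) (𝓝 0) := by
    have := ((hfc b (right_mem_Icc.2 hab.le)).mono_of_mem_nhdsWithin
      (Icc_mem_nhdsLT hab)).tendsto.sub_const (f b)
    rwa [sub_self] at this
  have hboundary : Tendsto (fun c ↦ (w c - w a) * (f c - f b)) (𝓝[<] b) (𝓝 0) := by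
    simpa [sub_mul] using hlim.sub (hf_lim.const_mul (w a))
  have hint : IntervalIntegrable (fun x ↦ (w x - w a) * f' x) volume a b := by
    simpa [sub_mul] using hwf'.sub (hf'.const_mul (w a))
  have hprimitive : Tendsto (fun c ↦ ∫ x in a..c, (w x - w a) * f' x) (𝓝[<] b)
      (𝓝 (∫ x in a..b, (w x - w a) * f' x)) :=
    ((intervalIntegral.continuousOn_primitive_interval' hint left_mem_uIcc) b right_mem_uIcc
      |>.mono_of_mem_nhdsWithin (by rw [uIcc_of_le hab.le]; exact Icc_mem_nhdsLT hab)).tendsto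
  have hremainder : 0 ≤ ∫ x in a..b, (w x - w a) * f' x :=
    le_of_tendsto_of_tendsto hboundary hprimitive
      (eventually_of_mem (Ioo_mem_nhdsLT hab) hpartial)
  have hFTC : ∫ x in a..b, f' x = f b - f a :=
    intervalIntegral.integral_eq_sub_of_hasDerivAt_of_le hab.le hfc hf hf'
  have hsplit : ∫ x in a..b, (w x - w a) * f' x =
      (∫ x in a..b, w x * f' x) - w a * (f b - f a) := by
    simp only [sub_mul]
    rw [intervalIntegral.integral_sub hwf' (hf'.const_mul _), intervalIntegral.integral_const_mul,
      hFTC]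
  linarith

end IntervalIntegral

noncomputable def hadamardKernel (α t s : ℝ) : ℝ := Real.log (t / s) ^ (-α)

section HadamardKernel

variable {α t s : ℝ}

theorem log_div_pos (hs : 0 < s) (hst : s < t) : 0 < Real.log (t / s) :=
  Real.log_pos ((one_lt_div hs).2 hst)

theorem hasDerivAt_hadamardKernel (hs : 0 < s) (hst : s < t) :
    HasDerivAt (hadamardKernel α t) (α / s * Real.log (t / s) ^ (-α - 1)) s := by
  unfold hadamardKernel
  have ht : 0 < t := hs.trans hst
  have hdiv : HasDerivAt (fun x ↦ t / x) (-(t / s ^ 2)) s := by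
    simpa [div_eq_mul_inv] using (hasDerivAt_inv hs.ne').const_mul t
  have hlog : HasDerivAt (fun x ↦ Real.log (t / x)) (-s⁻¹) s := by
    convert hdiv.log (div_pos ht hs).ne' using 1
    field_simp
  convert hlog.rpow_const (p := -α) (Or.inl (log_div_pos hs hst).ne') using 1
  ring

theorem continuousOn_hadamardKernel_deriv :
    ContinuousOn (fun x ↦ α / x * Real.log (t / x) ^ (-α - 1)) (Ioo 0 t) := by
  intro x hx
  refine ((continuousAt_const.div continuousAt_id hx.1.ne').mul
    (ContinuousAt.rpow_const ?_ (Or.inl (log_div_pos hx.1 hx.2).ne'))).continuousWithinAt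
  exact (continuousAt_const.div continuousAt_id hx.1.ne').log (div_pos (hx.1.trans hx.2) hx.1).ne'

theorem hadamardKernel_nonneg (hs : 0 < s) (hst : s < t) : 0 ≤ hadamardKernel α t s :=
  Real.rpow_nonneg (log_div_pos hs hst).le _

theorem hadamardKernel_le (hα : 0 ≤ α) (hs : 0 < s) (hst : s < t) :
    hadamardKernel α t s ≤ t ^ α * (t - s) ^ (-α) := by
  have ht : 0 < t := hs.trans hst
  have hts : 0 < t - s := sub_pos.2 hst
  have hlog : (t - s) / t ≤ Real.log (t / s) := by
    have := Real.one_sub_inv_le_log_of_pos (div_pos ht hs)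
    rwa [inv_div, one_sub_div ht.ne'] at this
  calc hadamardKernel α t s ≤ ((t - s) / t) ^ (-α) :=
        Real.rpow_le_rpow_of_nonpos (div_pos hts ht) hlog (neg_nonpos.2 hα)
    _ = t ^ α * (t - s) ^ (-α) := by
        rw [Real.div_rpow hts.le ht.le, Real.rpow_neg ht.le α, div_inv_eq_mul, mul_comm]

theorem continuousOn_hadamardKernel : ContinuousOn (hadamardKernel α t) (Ioo 0 t) :=
  fun _ hx ↦ (hasDerivAt_hadamardKernel (α := α) hx.1 hx.2).continuousAt.continuousWithinAt

theorem intervalIntegrable_hadamardKernel_mul {a M : ℝ} {g : ℝ → ℝ} (hα0 : 0 ≤ α) (hα1 : α < 1)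
    (ha : 0 < a) (hat : a ≤ t) (hg : AEStronglyMeasurable g (volume.restrict (Ioo a t)))
    (hgM : ∀ x ∈ Ioo a t, |g x| ≤ M) :
    IntervalIntegrable (fun x ↦ hadamardKernel α t x * g x) volume a t := by
  have hsing : IntervalIntegrable (fun x ↦ (t - x) ^ (-α)) volume a t := by
    simpa using (intervalIntegral.intervalIntegrable_rpow' (a := t - a) (b := 0)
      (by linarith)).comp_sub_left t
  refine intervalIntegrable_of_abs_le hat ((hsing.const_mul (t ^ α)).mul_const M)
    (((continuousOn_hadamardKernel.mono (Ioo_subset_Ioo_left ha.le)).aestronglyMeasurable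
      measurableSet_Ioo).mul hg) fun x hx ↦ ?_
  have hx0 : 0 < x := ha.trans hx.1
  rw [abs_mul, abs_of_nonneg (hadamardKernel_nonneg hx0 hx.2)]
  exact mul_le_mul (hadamardKernel_le hα0 hx0 hx.2) (hgM x hx) (abs_nonneg _)
    (mul_nonneg (Real.rpow_nonneg (hx0.trans hx.2).le _) (Real.rpow_nonneg (sub_pos.2 hx.2).le _))

theorem tendsto_hadamardKernel_mul_sub {f : ℝ → ℝ} {L : ℝ} (hα0 : 0 ≤ α) (hα1 : α < 1)
    (ht : 0 < t) (hf : ∀ᶠ s in 𝓝[<] t, |f s - f t| ≤ L * (t - s)) :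
    Tendsto (fun s ↦ hadamardKernel α t s * (f s - f t)) (𝓝[<] t) (𝓝 0) := by
  have hpow : Tendsto (fun s ↦ (t - s) ^ (1 - α)) (𝓝[<] t) (𝓝 0) := by
    have := (((continuous_const (y := t)).sub continuous_id).rpow_const
      fun _ ↦ Or.inr (sub_nonneg.2 hα1.le)).tendsto t
    rw [Pi.sub_apply, id, sub_self, Real.zero_rpow (sub_pos.2 hα1).ne'] at this
    exact this.mono_left nhdsWithin_le_nhds
  refine squeeze_zero_norm' ?_ (by simpa using hpow.const_mul (t ^ α * L))
  filter_upwards [hf, Ioo_mem_nhdsLT ht] with s hfs hs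
  have hts : 0 < t - s := sub_pos.2 hs.2
  rw [Real.norm_eq_abs, abs_mul, abs_of_nonneg (hadamardKernel_nonneg hs.1 hs.2)]
  calc hadamardKernel α t s * |f s - f t| ≤ t ^ α * (t - s) ^ (-α) * (L * (t - s)) :=
        mul_le_mul (hadamardKernel_le hα0 hs.1 hs.2) hfs (abs_nonneg _)
          (mul_nonneg (Real.rpow_nonneg ht.le _) (Real.rpow_nonneg hts.le _))
    _ = t ^ α * L * (t - s) ^ (1 - α) := by
        rw [sub_eq_neg_add 1 α, Real.rpow_add_one hts.ne']
        ring

end HadamardKernel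

theorem hadamardKernel_mul_sub_le_integral {α a t : ℝ} {L : NNReal} {f : ℝ → ℝ}
    (hα0 : 0 ≤ α) (hα1 : α < 1) (ha : 0 < a) (hat : a < t) (hL : LipschitzOnWith L f (Icc a t))
    (hf : ∀ s ∈ Ioo a t, DifferentiableAt ℝ f s) (hmax : IsMaxOn f (Icc a t) t) :
    hadamardKernel α t a * (f t - f a) ≤ ∫ s in a..t, hadamardKernel α t s * deriv f s := by
  have hderiv_le : ∀ s ∈ Ioo a t, |deriv f s| ≤ L := fun s hs ↦
    norm_deriv_le_of_lipschitzOn (Icc_mem_nhds hs.1 hs.2) hL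
  have hlip : ∀ᶠ s in 𝓝[<] t, |f s - f t| ≤ L * (t - s) := by
    filter_upwards [Ioo_mem_nhdsLT hat] with s hs
    have := hL.dist_le_mul s (Ioo_subset_Icc_self hs) t (right_mem_Icc.2 hat.le)
    rwa [Real.dist_eq, Real.dist_eq, abs_of_neg (sub_neg.2 hs.2), neg_sub] at this
  refine mul_sub_le_integral_mul_deriv_of_isMaxOn hat
    (fun s hs ↦ hasDerivAt_hadamardKernel (ha.trans_le hs.1) hs.2)
    (continuousOn_hadamardKernel_deriv.mono (Ico_subset_Ioo_left ha))
    (fun s hs ↦ mul_nonneg (div_nonneg hα0 (ha.trans_le hs.1).le)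
      (Real.rpow_nonneg (log_div_pos (ha.trans_le hs.1) hs.2).le _))
    hL.continuousOn (fun s hs ↦ (hf s hs).hasDerivAt)
    (intervalIntegrable_of_abs_le hat.le intervalIntegrable_const
      (measurable_deriv f).aestronglyMeasurable hderiv_le)
    (intervalIntegrable_hadamardKernel_mul hα0 hα1 ha hat.le
      (measurable_deriv f).aestronglyMeasurable hderiv_le)
    hmax (tendsto_hadamardKernel_mul_sub hα0 hα1 (ha.trans hat) hlip)

theorem caputoHadamard_extremum_max_general
    (T : ℝ) (f : ℝ → ℝ)
    (hf : ContDiffOn ℝ 1 f (Set.Icc 1 T))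
    (t₀ : ℝ) (ht₀ : t₀ ∈ Set.Ioc (1:ℝ) T)
    (hmax : ∀ t ∈ Set.Icc (1:ℝ) T, f t ≤ f t₀)
    (α : ℝ) (hα0 : 0 < α) (hα1 : α < 1) :
    (Real.log t₀) ^ (-α) / Real.Gamma (1 - α) * (f t₀ - f 1) ≤ caputoHadamard α f t₀ ∧
      0 ≤ (Real.log t₀) ^ (-α) / Real.Gamma (1 - α) * (f t₀ - f 1) := by
  obtain ⟨ht₀1, ht₀T⟩ := ht₀
  have hIcc : Icc 1 t₀ ⊆ Icc 1 T := Icc_subset_Icc_right ht₀T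
  obtain ⟨L, hL⟩ := hf.exists_lipschitzOnWith one_ne_zero (convex_Icc 1 T) isCompact_Icc
  have hkey := hadamardKernel_mul_sub_le_integral hα0.le hα1 zero_lt_one ht₀1 (hL.mono hIcc)
    (fun s hs ↦ (hf.differentiableOn one_ne_zero).differentiableAt
      (Icc_mem_nhds hs.1 (hs.2.trans_le ht₀T))) ((isMaxOn_iff.2 hmax).on_subset hIcc)
  rw [hadamardKernel, div_one] at hkey
  have hΓ : 0 < Real.Gamma (1 - α) := Real.Gamma_pos_of_pos (sub_pos.2 hα1)
  constructor
  · calc Real.log t₀ ^ (-α) / Real.Gamma (1 - α) * (f t₀ - f 1)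
        = 1 / Real.Gamma (1 - α) * (Real.log t₀ ^ (-α) * (f t₀ - f 1)) := by ring
      _ ≤ caputoHadamard α f t₀ := by unfold caputoHadamard; gcongr; exact hkey
  · exact mul_nonneg (div_nonneg (Real.rpow_nonneg (Real.log_nonneg ht₀1.le) _) hΓ.le)
      (sub_nonneg.2 (hmax 1 ⟨le_rfl, ht₀1.le.trans ht₀T⟩))

theorem caputoHadamard_extremum_max
    (T : ℝ) (hT : 1 < T) (f : ℝ → ℝ)
    (hf : ContDiffOn ℝ 1 f (Set.Icc 1 T))
    (t₀ : ℝ) (ht₀ : t₀ ∈ Set.Ioc (1:ℝ) T)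
    (hmax : ∀ t ∈ Set.Icc (1:ℝ) T, f t ≤ f t₀)
    (α : ℝ) (hα0 : 0 < α) (hα1 : α < 1) :
    (Real.log t₀) ^ (-α) / Real.Gamma (1 - α) * (f t₀ - f 1) ≤ caputoHadamard α f t₀ ∧
      0 ≤ (Real.log t₀) ^ (-α) / Real.Gamma (1 - α) * (f t₀ - f 1) :=
  caputoHadamard_extremum_max_general T f hf t₀ ht₀ hmax α hα0 hα1
end

section
/- Let Ω = G × (1,T] with G ⊂ ℝⁿ a bounded domain with smooth boundary, ν > 0, and 0 < α < 1. Suppose u, sufficiently smooth on the closure of Ω, satisfies D_{*,t}^α u(x,t) = ν Δₓ u(x,t) + F(x,t) in Ω, u(x,1) = φ(x) on Ḡ, u(x,t) = ψ(x,t) on ∂G × [1,T]. If F(x,t) ≥ 0 on the closure of Ω, then u(x,t) ≥ min{min_{∂G×[1,T]} ψ, min_Ḡ φ} on the closure of Ω. -/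
open Real MeasureTheory Set

/-- Caputo–Hadamard fractional derivative in the time variable, base point `1`. -/
noncomputable def caputoHadamardT {n : ℕ} (α : ℝ) (u : (Fin n → ℝ) → ℝ → ℝ)
    (x : Fin n → ℝ) (t : ℝ) : ℝ :=
  (1 / Real.Gamma (1 - α)) * ∫ s in (1:ℝ)..t, (Real.log (t / s)) ^ (-α) * deriv (u x) s

/-- Laplacian in the space variable. -/
noncomputable def laplacianX {n : ℕ} (u : (Fin n → ℝ) → ℝ → ℝ) (x : Fin n → ℝ) (t : ℝ) : ℝ :=
  ∑ j : Fin n, iteratedDeriv 2 (fun z => u (Function.update x j z) t) (x j)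

open Filter Topology
open scoped NNReal

/-!
The continuous function `u` attains its minimum over the compact set `closure G × [1, T]` at
some `(x₀, t₀)`. If `x₀ ∈ ∂G` or `t₀ = 1` this is a boundary or an initial value. Otherwise
every line restriction of `u(·, t₀)` has a local minimum at `x₀`, so `Δₓu(x₀, t₀) ≥ 0` and the
equation gives `D^α u(x₀, t₀) ≥ 0`. Integrating by parts against the kernel `(log (t₀/s))^(-α)`,
which increases in `s`, a minimum in time at `t₀` forces
`Γ(1-α) D^α u(x₀, t₀) ≤ (log t₀)^(-α) (u(x₀, t₀) - u(x₀, 1))`; hence `u(x₀, 1) ≤ u(x₀, t₀)` and the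
minimum is again an initial value.
-/

/-- `f` need not be differentiable: if `deriv (deriv f) x₀ < 0`, the second-derivative test makes
`x₀` a local maximum as well, so `f` is locally constant. -/
theorem deriv_deriv_nonneg_of_isLocalMin {f : ℝ → ℝ} {x₀ : ℝ} (hmin : IsLocalMin f x₀)
    (hc : ContinuousAt f x₀) : 0 ≤ deriv (deriv f) x₀ := by
  by_contra! hneg
  have hmax := isLocalMax_of_deriv_deriv_neg hneg hmin.deriv_eq_zero hc
  have hconst : f =ᶠ[𝓝 x₀] fun _ => f x₀ :=
    (hmin.and hmax).mono fun _ hx => le_antisymm hx.2 hx.1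
  have hderiv : deriv f =ᶠ[𝓝 x₀] fun _ => 0 :=
    hconst.eventuallyEq_nhds.mono fun _ hy => by rw [hy.deriv_eq, deriv_const]
  rw [hderiv.deriv_eq, deriv_const] at hneg
  exact lt_irrefl _ hneg

theorem laplacianX_nonneg_of_isLocalMin {n : ℕ} {u : (Fin n → ℝ) → ℝ → ℝ} {x : Fin n → ℝ} {t : ℝ}
    (hmin : IsLocalMin (fun y => u y t) x) (hc : ContinuousAt (fun y => u y t) x) :
    0 ≤ laplacianX u x t := by
  refine Finset.sum_nonneg fun j _ => ?_
  have hline : ContinuousAt (Function.update x j) (x j) :=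
    (continuous_const.update j continuous_id).continuousAt
  rw [iteratedDeriv_succ, iteratedDeriv_one]
  rw [← Function.update_eq_self j x] at hmin hc
  exact deriv_deriv_nonneg_of_isLocalMin (hmin.comp_continuous hline) (hc.comp hline)

theorem integral_mul_deriv_le_of_nonneg {k k' w w' : ℝ → ℝ} {a b : ℝ} (hab : a ≤ b)
    (hkc : ContinuousOn k (Icc a b)) (hwc : ContinuousOn w (Icc a b))
    (hk : ∀ x ∈ Ioo a b, HasDerivAt k (k' x) x) (hw : ∀ x ∈ Ioo a b, HasDerivAt w (w' x) x)
    (hk'i : IntervalIntegrable k' volume a b) (hw'i : IntervalIntegrable w' volume a b)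
    (hk' : ∀ x ∈ Icc a b, 0 ≤ k' x) (hw0 : ∀ x ∈ Icc a b, 0 ≤ w x) :
    ∫ x in a..b, k x * w' x ≤ k b * w b - k a * w a := by
  rw [← uIcc_of_le hab] at hkc hwc
  have hIoo : Ioo (min a b) (max a b) = Ioo a b := by rw [min_eq_left hab, max_eq_right hab]
  rw [← hIoo] at hk hw
  rw [intervalIntegral.integral_mul_deriv_eq_deriv_mul_of_hasDerivAt hkc hwc hk hw hk'i hw'i]
  have : 0 ≤ ∫ x in a..b, k' x * w x :=
    intervalIntegral.integral_nonneg hab fun x hx => mul_nonneg (hk' x hx) (hw0 x hx)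
  linarith

theorem LipschitzOnWith.intervalIntegrable_deriv {v : ℝ → ℝ} {K : ℝ≥0} {a b : ℝ} (hab : a ≤ b)
    (hv : LipschitzOnWith K v (Icc a b)) : IntervalIntegrable (deriv v) volume a b := by
  rw [intervalIntegrable_iff_integrableOn_Ioo_of_le hab]
  refine (integrableOn_const (C := (K : ℝ)) measure_Ioo_lt_top.ne).mono'
    (measurable_deriv v).aestronglyMeasurable ?_
  filter_upwards [ae_restrict_mem measurableSet_Ioo] with s hs
  exact norm_deriv_le_of_lipschitzOn (Icc_mem_nhds hs.1 hs.2) hv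

section HadamardKernel

variable {α t : ℝ}

theorem log_div_rpow_neg_le {s : ℝ} (hα : 0 ≤ α) (hs : 0 < s) (hst : s < t) :
    log (t / s) ^ (-α) ≤ t ^ α * (t - s) ^ (-α) := by
  have ht : 0 < t := hs.trans hst
  have hts : 0 < t - s := sub_pos.2 hst
  have hlog : (t - s) / t ≤ log (t / s) := by
    have := one_sub_inv_le_log_of_pos (div_pos ht hs)
    rwa [inv_div, one_sub_div ht.ne'] at this
  calc log (t / s) ^ (-α) ≤ ((t - s) / t) ^ (-α) :=
        rpow_le_rpow_of_nonpos (div_pos hts ht) hlog (neg_nonpos.2 hα)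
    _ = t ^ α * (t - s) ^ (-α) := by
        rw [div_rpow hts.le ht.le, rpow_neg ht.le, div_inv_eq_mul, mul_comm]

theorem hasDerivAt_log_div_rpow_neg {s : ℝ} (hs : 0 < s) (hst : s < t) :
    HasDerivAt (fun r => log (t / r) ^ (-α)) (α * s⁻¹ * log (t / s) ^ (-α - 1)) s := by
  have ht : 0 < t := hs.trans hst
  have hsplit : (fun r => log t - log r) =ᶠ[𝓝 s] fun r => log (t / r) := by
    filter_upwards [eventually_gt_nhds hs] with r hr
    rw [log_div ht.ne' hr.ne']
  have hlog : HasDerivAt (fun r => log (t / r)) (-s⁻¹) s :=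
    ((hasDerivAt_log hs.ne').const_sub (log t)).congr_of_eventuallyEq hsplit.symm
  exact (hlog.rpow_const (Or.inl (log_pos ((one_lt_div hs).2 hst)).ne')).congr_deriv (by ring)

theorem continuousAt_log_div_rpow {p s : ℝ} (hs : 0 < s) (hst : s < t) :
    ContinuousAt (fun r => log (t / r) ^ p) s :=
  ((continuousAt_const.div continuousAt_id hs.ne').log (div_pos (hs.trans hst) hs).ne').rpow_const
    (Or.inl (log_pos ((one_lt_div hs).2 hst)).ne')

theorem intervalIntegrable_log_div_rpow_neg {a : ℝ} (hα0 : 0 ≤ α) (hα1 : α < 1) (ha : 0 < a)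
    (hat : a ≤ t) : IntervalIntegrable (fun s => log (t / s) ^ (-α)) volume a t := by
  rw [intervalIntegrable_iff_integrableOn_Ioo_of_le hat]
  have hdom : IntegrableOn (fun s => t ^ α * (t - s) ^ (-α)) (Ioo a t) := by
    have h := (intervalIntegral.intervalIntegrable_rpow' (a := 0) (b := t - a)
      (neg_lt_neg hα1)).comp_sub_left t
    rw [sub_zero, sub_sub_cancel, IntervalIntegrable.symm_iff,
      intervalIntegrable_iff_integrableOn_Ioo_of_le hat] at h
    exact h.const_mul _
  refine hdom.mono' (Measurable.aestronglyMeasurable (by fun_prop)) ?_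
  filter_upwards [ae_restrict_mem measurableSet_Ioo] with s hs
  rw [norm_of_nonneg (rpow_nonneg (log_nonneg ((one_le_div (ha.trans hs.1)).2 hs.2.le)) _)]
  exact log_div_rpow_neg_le hα0 (ha.trans hs.1) hs.2

theorem tendsto_log_div_rpow_neg_mul_nhdsLT {w : ℝ → ℝ} {K : ℝ} (hα0 : 0 ≤ α) (hα1 : α < 1)
    (ht : 0 < t) (hw : ∀ᶠ s in 𝓝[<] t, |w s| ≤ K * (t - s)) :
    Tendsto (fun s => log (t / s) ^ (-α) * w s) (𝓝[<] t) (𝓝 0) := by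
  have hbound : Tendsto (fun s => K * t ^ α * (t - s) ^ (1 - α)) (𝓝[<] t) (𝓝 0) := by
    have hc : ContinuousAt (fun s => K * t ^ α * (t - s) ^ (1 - α)) t :=
      continuousAt_const.mul
        ((continuousAt_const.sub continuousAt_id).rpow_const (Or.inr (by linarith)))
    simpa [zero_rpow (by linarith : 1 - α ≠ 0)] using hc.tendsto.mono_left nhdsWithin_le_nhds
  refine squeeze_zero_norm' ?_ hbound
  filter_upwards [hw, Ioo_mem_nhdsLT ht] with s hws hs
  have hts : 0 < t - s := sub_pos.2 hs.2
  have hk : 0 ≤ log (t / s) ^ (-α) :=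
    rpow_nonneg (log_nonneg ((one_le_div hs.1).2 hs.2.le)) _
  calc ‖log (t / s) ^ (-α) * w s‖ = log (t / s) ^ (-α) * |w s| := by
        rw [norm_mul, norm_of_nonneg hk, Real.norm_eq_abs]
    _ ≤ t ^ α * (t - s) ^ (-α) * (K * (t - s)) :=
        mul_le_mul (log_div_rpow_neg_le hα0 hs.1 hs.2) hws (abs_nonneg _) (by positivity)
    _ = K * t ^ α * (t - s) ^ (1 - α) := by
        rw [show 1 - α = -α + 1 by ring, rpow_add_one hts.ne']; ring

end HadamardKernel

theorem integral_log_div_rpow_neg_mul_deriv_le_of_lt {v : ℝ → ℝ} {a τ t α m : ℝ} {K : ℝ≥0}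
    (hα0 : 0 ≤ α) (ha : 0 < a) (haτ : a ≤ τ) (hτt : τ < t) (hvd : DifferentiableOn ℝ v (Ioo a τ))
    (hvl : LipschitzOnWith K v (Icc a τ)) (hm : ∀ s ∈ Icc a τ, m ≤ v s) :
    ∫ s in a..τ, log (t / s) ^ (-α) * deriv v s
      ≤ log (t / τ) ^ (-α) * (v τ - m) - log (t / a) ^ (-α) * (v a - m) := by
  have hpos : ∀ s ∈ Icc a τ, 0 < s ∧ s < t := fun s hs => ⟨ha.trans_le hs.1, hs.2.trans_lt hτt⟩
  have hk : ∀ s ∈ Icc a τ,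
      HasDerivAt (fun r => log (t / r) ^ (-α)) (α * s⁻¹ * log (t / s) ^ (-α - 1)) s :=
    fun s hs => hasDerivAt_log_div_rpow_neg (hpos s hs).1 (hpos s hs).2
  have hk'c : ContinuousOn (fun s => α * s⁻¹ * log (t / s) ^ (-α - 1)) (uIcc a τ) := by
    rw [uIcc_of_le haτ]
    exact fun s hs => ((continuousAt_const.mul (continuousAt_inv₀ (hpos s hs).1.ne')).mul
      (continuousAt_log_div_rpow (hpos s hs).1 (hpos s hs).2)).continuousWithinAt
  have hk' : ∀ s ∈ Icc a τ, 0 ≤ α * s⁻¹ * log (t / s) ^ (-α - 1) := fun s hs =>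
    mul_nonneg (mul_nonneg hα0 (inv_nonneg.2 (hpos s hs).1.le))
      (rpow_nonneg (log_nonneg ((one_le_div (hpos s hs).1).2 (hpos s hs).2.le)) _)
  have hv : ∀ s ∈ Ioo a τ, HasDerivAt (fun r => v r - m) (deriv v s) s := fun s hs =>
    (hvd.differentiableAt (Ioo_mem_nhds hs.1 hs.2)).hasDerivAt.sub_const m
  exact integral_mul_deriv_le_of_nonneg haτ (fun s hs => (hk s hs).continuousAt.continuousWithinAt)
    (hvl.continuousOn.sub continuousOn_const) (fun s hs => hk s (Ioo_subset_Icc_self hs)) hv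
    hk'c.intervalIntegrable (hvl.intervalIntegrable_deriv haτ) hk'
    (fun s hs => sub_nonneg.2 (hm s hs))

/-- The kernel is singular at `s = t`: integrate by parts on `[a, τ]` and let `τ → t⁻`; the
boundary term vanishes since `|v τ - v t| = O(t - τ)` and `α < 1`. -/
theorem integral_log_div_rpow_neg_mul_deriv_le {v : ℝ → ℝ} {a t α : ℝ} {K : ℝ≥0} (hα0 : 0 ≤ α)
    (hα1 : α < 1) (ha : 0 < a) (hat : a < t) (hvd : DifferentiableOn ℝ v (Ioo a t))
    (hvl : LipschitzOnWith K v (Icc a t)) (hmin : IsMinOn v (Icc a t) t) :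
    ∫ s in a..t, log (t / s) ^ (-α) * deriv v s ≤ log (t / a) ^ (-α) * (v t - v a) := by
  have hint : IntervalIntegrable (fun s => log (t / s) ^ (-α) * deriv v s) volume a t := by
    have hk := intervalIntegrable_log_div_rpow_neg hα0 hα1 ha hat.le
    rw [intervalIntegrable_iff_integrableOn_Ioo_of_le hat.le] at hk ⊢
    refine hk.mul_bdd (c := K) (measurable_deriv v).aestronglyMeasurable ?_
    filter_upwards [ae_restrict_mem measurableSet_Ioo] with s hs
    exact norm_deriv_le_of_lipschitzOn (Icc_mem_nhds hs.1 hs.2) hvl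
  have hprim : Tendsto (fun τ => ∫ s in a..τ, log (t / s) ^ (-α) * deriv v s) (𝓝[<] t)
      (𝓝 (∫ s in a..t, log (t / s) ^ (-α) * deriv v s)) := by
    have := intervalIntegral.continuousOn_primitive_interval' hint left_mem_uIcc t right_mem_uIcc
    rw [← nhdsWithin_Ioo_eq_nhdsLT hat]
    exact this.mono (uIcc_of_le hat.le ▸ Ioo_subset_Icc_self)
  have hboundary : Tendsto (fun τ => log (t / τ) ^ (-α) * (v τ - v t)) (𝓝[<] t) (𝓝 0) := by
    refine tendsto_log_div_rpow_neg_mul_nhdsLT (K := K) hα0 hα1 (ha.trans hat) ?_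
    filter_upwards [Ioo_mem_nhdsLT hat] with τ hτ
    have := hvl.dist_le_mul τ (Ioo_subset_Icc_self hτ) t (right_mem_Icc.2 hat.le)
    rwa [Real.dist_eq, Real.dist_eq, abs_sub_comm τ, abs_of_pos (sub_pos.2 hτ.2)] at this
  have hpartial : ∀ τ ∈ Ioo a t, ∫ s in a..τ, log (t / s) ^ (-α) * deriv v s
      ≤ log (t / τ) ^ (-α) * (v τ - v t) - log (t / a) ^ (-α) * (v a - v t) := fun τ hτ =>
    integral_log_div_rpow_neg_mul_deriv_le_of_lt hα0 ha hτ.1.le hτ.2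
      (hvd.mono (Ioo_subset_Ioo_right hτ.2.le)) (hvl.mono (Icc_subset_Icc_right hτ.2.le))
      fun s hs => hmin ⟨hs.1, hs.2.trans hτ.2.le⟩
  calc ∫ s in a..t, log (t / s) ^ (-α) * deriv v s ≤ 0 - log (t / a) ^ (-α) * (v a - v t) :=
        le_of_tendsto_of_tendsto hprim (hboundary.sub_const _)
          (eventually_of_mem (Ioo_mem_nhdsLT hat) hpartial)
    _ = log (t / a) ^ (-α) * (v t - v a) := by ring

theorem le_of_caputoHadamardT_nonneg_of_isMinOn {n : ℕ} {α t : ℝ} {u : (Fin n → ℝ) → ℝ → ℝ}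
    {x : Fin n → ℝ} (hα0 : 0 ≤ α) (hα1 : α < 1) (ht : 1 < t)
    (hreg : ContDiffOn ℝ 1 (u x) (Icc 1 t)) (hmin : IsMinOn (u x) (Icc 1 t) t)
    (hCH : 0 ≤ caputoHadamardT α u x t) : u x 1 ≤ u x t := by
  obtain ⟨K, hK⟩ := hreg.exists_lipschitzOnWith one_ne_zero (convex_Icc _ _) isCompact_Icc
  have hest := integral_log_div_rpow_neg_mul_deriv_le hα0 hα1 one_pos ht
    ((hreg.differentiableOn one_ne_zero).mono Ioo_subset_Icc_self) hK hmin
  rw [div_one] at hest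
  have hint := nonneg_of_mul_nonneg_right hCH (one_div_pos.2 (Gamma_pos_of_pos (sub_pos.2 hα1)))
  exact sub_nonneg.1 (nonneg_of_mul_nonneg_right (hint.trans hest) (rpow_pos_of_pos (log_pos ht) _))

theorem le_of_isMinOn_of_mul_laplacianX_le_caputoHadamardT {n : ℕ} {S : Set (Fin n → ℝ)}
    {T ν α t₀ : ℝ} {u : (Fin n → ℝ) → ℝ → ℝ} {x₀ : Fin n → ℝ} (hν : 0 ≤ ν) (hα0 : 0 ≤ α)
    (hα1 : α < 1) (hS : S ∈ 𝓝 x₀) (ht₀ : t₀ ∈ Icc 1 T)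
    (huc : ContinuousOn (fun p : (Fin n → ℝ) × ℝ => u p.1 p.2) (S ×ˢ Icc 1 T))
    (hmin : IsMinOn (fun p : (Fin n → ℝ) × ℝ => u p.1 p.2) (S ×ˢ Icc 1 T) (x₀, t₀))
    (hreg : ContDiffOn ℝ 1 (u x₀) (Icc 1 T))
    (hsuper : 1 < t₀ → ν * laplacianX u x₀ t₀ ≤ caputoHadamardT α u x₀ t₀) :
    u x₀ 1 ≤ u x₀ t₀ := by
  rcases ht₀.1.eq_or_lt with rfl | ht₀1
  · exact le_rfl
  have hx₀ : x₀ ∈ S := mem_of_mem_nhds hS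
  have hlap : 0 ≤ laplacianX u x₀ t₀ := laplacianX_nonneg_of_isLocalMin
    (IsMinOn.isLocalMin (fun y hy => hmin (mk_mem_prod hy ht₀)) hS)
    ((huc.comp (continuousOn_id.prodMk continuousOn_const) fun y hy => ⟨hy, ht₀⟩).continuousAt hS)
  exact le_of_caputoHadamardT_nonneg_of_isMinOn hα0 hα1 ht₀1
    (hreg.mono (Icc_subset_Icc_right ht₀.2))
    (fun s hs => hmin (mk_mem_prod hx₀ ⟨hs.1, hs.2.trans ht₀.2⟩))
    ((mul_nonneg hν hlap).trans (hsuper ht₀1))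

theorem minimum_principle_caputoHadamard_diffusion_general
    {n : ℕ} (G : Set (Fin n → ℝ)) (hGopen : IsOpen G)
    (hGbdd : Bornology.IsBounded G)
    (T ν α : ℝ) (hν : 0 < ν) (hα0 : 0 < α) (hα1 : α < 1)
    (u F : (Fin n → ℝ) → ℝ → ℝ) (φ : (Fin n → ℝ) → ℝ) (ψ : (Fin n → ℝ) → ℝ → ℝ)
    (huc : ContinuousOn (fun p : (Fin n → ℝ) × ℝ => u p.1 p.2) (closure G ×ˢ Set.Icc 1 T))
    (hureg : ∀ x ∈ G, ContDiffOn ℝ 1 (u x) (Set.Icc 1 T))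
    (heq : ∀ x ∈ G, ∀ t ∈ Set.Ioc (1:ℝ) T,
      caputoHadamardT α u x t = ν * laplacianX u x t + F x t)
    (hinit : ∀ x ∈ closure G, u x 1 = φ x)
    (hbdry : ∀ x ∈ frontier G, ∀ t ∈ Set.Icc (1:ℝ) T, u x t = ψ x t)
    (hF : ∀ x ∈ closure G, ∀ t ∈ Set.Icc (1:ℝ) T, 0 ≤ F x t) :
    ∀ x ∈ closure G, ∀ t ∈ Set.Icc (1:ℝ) T,
      min (sInf {y : ℝ | ∃ x' ∈ frontier G, ∃ t' ∈ Set.Icc (1:ℝ) T, ψ x' t' = y})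
          (sInf (φ '' closure G)) ≤ u x t := by
  intro x hx t ht
  obtain ⟨⟨x₀, t₀⟩, ⟨hx₀, ht₀⟩, hmin⟩ :=
    (hGbdd.isCompact_closure.prod isCompact_Icc).exists_isMinOn ⟨(x, t), hx, ht⟩ huc
  have hlow : ∀ y ∈ closure G, ∀ s ∈ Icc 1 T, u x₀ t₀ ≤ u y s := fun y hy s hs =>
    hmin (mk_mem_prod hy hs)
  refine le_trans ?_ (hlow x hx t ht)
  by_cases hx₀G : x₀ ∈ G
  · have hinit_le : u x₀ 1 ≤ u x₀ t₀ :=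
      le_of_isMinOn_of_mul_laplacianX_le_caputoHadamardT hν.le hα0.le hα1
        (mem_of_superset (hGopen.mem_nhds hx₀G) subset_closure) ht₀ huc hmin (hureg x₀ hx₀G)
        fun ht₀1 => (heq x₀ hx₀G t₀ ⟨ht₀1, ht₀.2⟩).ge.trans'
          (le_add_of_nonneg_right (hF x₀ hx₀ t₀ ht₀))
    have hbdd : BddBelow (φ '' closure G) := ⟨u x₀ t₀, by
      rintro _ ⟨y, hy, rfl⟩
      exact hinit y hy ▸ hlow y hy 1 ⟨le_rfl, ht₀.1.trans ht₀.2⟩⟩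
    exact min_le_of_right_le
      ((csInf_le hbdd (mem_image_of_mem φ hx₀)).trans (hinit x₀ hx₀ ▸ hinit_le))
  · have hfr : x₀ ∈ frontier G := ⟨hx₀, by rwa [hGopen.interior_eq]⟩
    have hbdd : BddBelow {y : ℝ | ∃ x' ∈ frontier G, ∃ t' ∈ Set.Icc (1:ℝ) T, ψ x' t' = y} :=
      ⟨u x₀ t₀, by
        rintro _ ⟨y, hy, s, hs, rfl⟩
        exact hbdry y hy s hs ▸ hlow y (frontier_subset_closure hy) s hs⟩
    exact min_le_of_left_le ((csInf_le hbdd ⟨x₀, hfr, t₀, ht₀, rfl⟩).trans (hbdry x₀ hfr t₀ ht₀).ge)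

theorem minimum_principle_caputoHadamard_diffusion
    {n : ℕ} (G : Set (Fin n → ℝ)) (hGopen : IsOpen G) (hGne : G.Nonempty)
    (hGbdd : Bornology.IsBounded G)
    (T ν α : ℝ) (hT : 1 < T) (hν : 0 < ν) (hα0 : 0 < α) (hα1 : α < 1)
    (u F : (Fin n → ℝ) → ℝ → ℝ) (φ : (Fin n → ℝ) → ℝ) (ψ : (Fin n → ℝ) → ℝ → ℝ)
    (hFc : ContinuousOn (fun p : (Fin n → ℝ) × ℝ => F p.1 p.2) (closure G ×ˢ Set.Icc 1 T))
    (hφc : ContinuousOn φ (closure G))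
    (hψc : ContinuousOn (fun p : (Fin n → ℝ) × ℝ => ψ p.1 p.2) (closure G ×ˢ Set.Icc 1 T))
    (huc : ContinuousOn (fun p : (Fin n → ℝ) × ℝ => u p.1 p.2) (closure G ×ˢ Set.Icc 1 T))
    (hureg : ∀ x ∈ G, ContDiffOn ℝ 1 (u x) (Set.Icc 1 T))
    (heq : ∀ x ∈ G, ∀ t ∈ Set.Ioc (1:ℝ) T,
      caputoHadamardT α u x t = ν * laplacianX u x t + F x t)
    (hinit : ∀ x ∈ closure G, u x 1 = φ x)
    (hbdry : ∀ x ∈ frontier G, ∀ t ∈ Set.Icc (1:ℝ) T, u x t = ψ x t)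
    (hF : ∀ x ∈ closure G, ∀ t ∈ Set.Icc (1:ℝ) T, 0 ≤ F x t) :
    ∀ x ∈ closure G, ∀ t ∈ Set.Icc (1:ℝ) T,
      min (sInf {y : ℝ | ∃ x' ∈ frontier G, ∃ t' ∈ Set.Icc (1:ℝ) T, ψ x' t' = y})
          (sInf (φ '' closure G)) ≤ u x t :=
  minimum_principle_caputoHadamard_diffusion_general G hGopen hGbdd T ν α hν hα0 hα1 u F φ ψ huc
    hureg heq hinit hbdry hF
end

section
/- Let F(x,t,u) be continuous and nonincreasing in u. Then the nonlinear equation D_{*,t}^α u = ν Δₓ u + F(x,t,u) in Ω = G × (1,T], with initial condition u(x,1) = φ(x) and boundary condition u|_{∂G×[1,T]} = ψ(x,t), admits at most one solution u ∈ C²(Ḡ) ∩ H¹((1,T]) (classical in the stated sense). -/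
open Real MeasureTheory Set

/-- `u` is a classical solution of the nonlinear Caputo–Hadamard time-fractional
diffusion problem with nonlinearity `F`, initial data `φ` and boundary data `ψ`. -/
def IsSolutionNonlinearCH {n : ℕ} (G : Set (Fin n → ℝ)) (T ν α : ℝ)
    (u : (Fin n → ℝ) → ℝ → ℝ) (F : (Fin n → ℝ) → ℝ → ℝ → ℝ)
    (φ : (Fin n → ℝ) → ℝ) (ψ : (Fin n → ℝ) → ℝ → ℝ) : Prop :=
  ContinuousOn (fun p : (Fin n → ℝ) × ℝ => u p.1 p.2) (closure G ×ˢ Set.Icc 1 T) ∧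
  (∀ x ∈ G, ContDiffOn ℝ 1 (u x) (Set.Icc 1 T)) ∧
  (∀ t ∈ Set.Ioc (1:ℝ) T, ContDiffOn ℝ 2 (fun x => u x t) G) ∧
  (∀ x ∈ G, ∀ t ∈ Set.Ioc (1:ℝ) T,
      caputoHadamardT α u x t = ν * laplacianX u x t + F x t (u x t)) ∧
  (∀ x ∈ closure G, u x 1 = φ x) ∧
  (∀ x ∈ frontier G, ∀ t ∈ Set.Icc (1:ℝ) T, u x t = ψ x t)

/-
Weak maximum principle. If `w = u₁ - u₂` had a positive maximum `M` on `closure G × [1, T]`,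
the boundary and initial data would force it to be attained at some `x₀ ∈ G`, `t₀ > 1`. There
`Δₓ w ≤ 0`, and `F(u₁) - F(u₂) ≤ 0` by monotonicity, so the equations give `D^α w ≤ 0`. But
integrating by parts against the Hadamard kernel `s ↦ log (t₀ / s) ^ (-α)`, which increases on
`[1, t₀)`, shows `Γ(1 - α) D^α w(x₀, t₀) ≥ (log t₀) ^ (-α) M > 0`.
-/

open Filter Topology intervalIntegral

section HadamardKernel

variable {a t α : ℝ}

theorem rpow_neg_log_div_le (hα : 0 < α) {s : ℝ} (hs : 0 < s) (hst : s ≤ t) :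
    log (t / s) ^ (-α) ≤ t ^ α * (t - s) ^ (-α) := by
  rcases hst.eq_or_lt with rfl | hlt
  -- at `s = t` both sides are the junk value `0 ^ (-α) = 0`
  · rw [div_self hs.ne', log_one, sub_self, zero_rpow (neg_ne_zero.2 hα.ne'), mul_zero]
  have ht : 0 < t := hs.trans hlt
  have hlog : (t - s) / t ≤ log (t / s) := by
    have := one_sub_inv_le_log_of_pos (div_pos ht hs)
    rwa [inv_div, one_sub_div ht.ne'] at this
  calc log (t / s) ^ (-α) ≤ ((t - s) / t) ^ (-α) :=
        rpow_le_rpow_of_nonpos (div_pos (sub_pos.2 hlt) ht) hlog (by linarith)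
    _ = t ^ α * (t - s) ^ (-α) := by
        rw [div_rpow (sub_pos.2 hlt).le ht.le, rpow_neg ht.le, div_inv_eq_mul, mul_comm]

theorem intervalIntegrable_rpow_neg_log_div (hα0 : 0 < α) (hα1 : α < 1) (ha : 0 < a)
    (hat : a ≤ t) : IntervalIntegrable (fun s => log (t / s) ^ (-α)) volume a t := by
  have hbound : IntervalIntegrable (fun s => t ^ α * (t - s) ^ (-α)) volume a t := by
    have h := (intervalIntegrable_rpow' (a := t - a) (b := t - t) (r := -α)
      (by linarith)).comp_sub_left t
    simp only [sub_sub_cancel] at h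
    exact h.const_mul _
  refine hbound.mono_fun
    ((measurable_log.comp (measurable_const.div measurable_id)).pow_const _).aestronglyMeasurable ?_
  rw [uIoc_of_le hat]
  filter_upwards [ae_restrict_mem measurableSet_Ioc] with s hs
  have hs0 : 0 < s := ha.trans hs.1
  rw [norm_of_nonneg (rpow_nonneg (log_nonneg ((one_le_div hs0).2 hs.2)) _),
    norm_of_nonneg (mul_nonneg (rpow_nonneg (hs0.le.trans hs.2) _)
      (rpow_nonneg (sub_nonneg.2 hs.2) _))]
  exact rpow_neg_log_div_le hα0 hs0 hs.2

theorem IntervalIntegrable.mul_deriv_of_contDiffOn {f v : ℝ → ℝ} {b : ℝ} (hab : a < b)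
    (hf : IntervalIntegrable f volume a b) (hv : ContDiffOn ℝ 1 v (Icc a b)) :
    IntervalIntegrable (fun s => f s * deriv v s) volume a b := by
  obtain ⟨C, hC⟩ := isCompact_Icc.exists_bound_of_continuousOn
    (hv.continuousOn_derivWithin (uniqueDiffOn_Icc hab) le_rfl)
  rw [intervalIntegrable_iff_integrableOn_Ioo_of_le hab.le] at hf ⊢
  refine hf.mul_bdd (c := C) (measurable_deriv v).aestronglyMeasurable ?_
  filter_upwards [ae_restrict_mem measurableSet_Ioo] with s hs
  rw [← derivWithin_of_mem_nhds (Icc_mem_nhds hs.1 hs.2)]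
  exact hC s (Ioo_subset_Icc_self hs)

theorem hasDerivAt_rpow_neg_log_div {s : ℝ} (hs : 0 < s) (hst : s < t) :
    HasDerivAt (fun r => log (t / r) ^ (-α)) (α * log (t / s) ^ (-α - 1) / s) s := by
  have hlog : log (t / s) ≠ 0 := (log_pos ((one_lt_div hs).2 hst)).ne'
  have h := ((hasDerivAt_inv hs.ne').const_mul t).log (div_pos (hs.trans hst) hs).ne'
  convert (h.rpow_const (p := -α) (Or.inl hlog)) using 1
  · simp [div_eq_mul_inv]
  · field_simp [(hs.trans hst).ne']

theorem integral_rpow_neg_log_mul_deriv_ge {τ M : ℝ} (hα : 0 < α) (ha : 0 < a) (haτ : a < τ)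
    (hτt : τ < t) {w : ℝ → ℝ} (hw : ContDiffOn ℝ 1 w (Icc a τ))
    (hle : ∀ s ∈ Icc a τ, w s ≤ M) :
    log (t / τ) ^ (-α) * (w τ - M) + log (t / a) ^ (-α) * (M - w a) ≤
      ∫ s in a..τ, log (t / s) ^ (-α) * deriv w s := by
  set g : ℝ → ℝ := fun r => log (t / r) ^ (-α)
  set g' : ℝ → ℝ := fun r => α * log (t / r) ^ (-α - 1) / r
  have hg : ∀ r ∈ Icc a τ, HasDerivAt g (g' r) r := fun r hr =>
    hasDerivAt_rpow_neg_log_div (ha.trans_le hr.1) (hr.2.trans_lt hτt)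
  have hg'_nonneg : ∀ r ∈ Icc a τ, 0 ≤ g' r := fun r hr =>
    div_nonneg (mul_nonneg hα.le (rpow_nonneg (log_nonneg
      ((one_le_div (ha.trans_le hr.1)).2 (hr.2.trans hτt.le))) _)) (ha.trans_le hr.1).le
  have hg'_cont : ContinuousOn g' (Icc a τ) := by
    intro r hr
    have hr0 : 0 < r := ha.trans_le hr.1
    have hlog : log (t / r) ≠ 0 := (log_pos ((one_lt_div hr0).2 (hr.2.trans_lt hτt))).ne'
    have hc : ContinuousAt (fun r => log (t / r)) r :=
      (continuousAt_const.div continuousAt_id hr0.ne').log (div_pos (hr0.trans_le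
        (hr.2.trans hτt.le)) hr0).ne'
    exact ((continuousAt_const.mul (hc.rpow_const (Or.inl hlog))).div continuousAt_id
      hr0.ne').continuousWithinAt
  have hg'_int : IntervalIntegrable g' volume a τ := hg'_cont.intervalIntegrable_of_Icc haτ.le
  have hw' : ∀ r ∈ Ioo a τ, HasDerivAt w (deriv w r) r := fun r hr =>
    ((hw.contDiffAt (Icc_mem_nhds hr.1 hr.2)).differentiableAt one_ne_zero).hasDerivAt
  have hw'_int : IntervalIntegrable (deriv w) volume a τ := by
    simpa using (intervalIntegrable_const (c := (1 : ℝ))).mul_deriv_of_contDiffOn haτ hw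
  have hparts : ∫ s in a..τ, g s * deriv w s =
      g τ * w τ - g a * w a - ∫ s in a..τ, g' s * w s := by
    refine integral_mul_deriv_eq_deriv_mul_of_hasDerivAt ?_ ?_ ?_ ?_ hg'_int hw'_int <;>
      simp only [uIcc_of_le haτ.le, min_eq_left haτ.le, max_eq_right haτ.le]
    · exact fun r hr => (hg r hr).continuousAt.continuousWithinAt
    · exact hw.continuousOn
    · exact fun r hr => hg r (Ioo_subset_Icc_self hr)
    · exact hw'
  have hftc : ∫ s in a..τ, g' s = g τ - g a :=
    integral_eq_sub_of_hasDerivAt (by rwa [uIcc_of_le haτ.le]) hg'_int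
  have hbound : ∫ s in a..τ, g' s * w s ≤ ∫ s in a..τ, g' s * M :=
    integral_mono_on haτ.le (hg'_cont.mul hw.continuousOn |>.intervalIntegrable_of_Icc haτ.le)
      (hg'_int.mul_const M) fun s hs => mul_le_mul_of_nonneg_left (hle s hs) (hg'_nonneg s hs)
  rw [intervalIntegral.integral_mul_const, hftc] at hbound
  show g τ * (w τ - M) + g a * (M - w a) ≤ ∫ s in a..τ, g s * deriv w s
  rw [hparts]
  linarith

theorem tendsto_rpow_neg_log_mul_sub_nhdsLT (hα0 : 0 < α) (hα1 : α < 1) (ht : 0 < t)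
    {w : ℝ → ℝ} {C : ℝ} (hlip : ∀ᶠ τ in 𝓝[<] t, |w τ - w t| ≤ C * (t - τ)) :
    Tendsto (fun τ => log (t / τ) ^ (-α) * (w τ - w t)) (𝓝[<] t) (𝓝 0) := by
  have hlim : Tendsto (fun τ => t ^ α * C * (t - τ) ^ (1 - α)) (𝓝[<] t) (𝓝 0) := by
    have : ContinuousAt (fun τ => t ^ α * C * (t - τ) ^ (1 - α)) t :=
      continuousAt_const.mul ((continuousAt_const.sub continuousAt_id).rpow_const
        (Or.inr (by linarith)))
    simpa [zero_rpow (by linarith : 1 - α ≠ 0)] using this.tendsto.mono_left nhdsWithin_le_nhds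
  refine squeeze_zero_norm' ?_ hlim
  filter_upwards [hlip, Ioo_mem_nhdsLT ht] with τ hτ hτ'
  have hts : 0 < t - τ := sub_pos.2 hτ'.2
  rw [norm_mul, norm_of_nonneg (rpow_nonneg (log_nonneg ((one_le_div hτ'.1).2 hτ'.2.le)) _),
    Real.norm_eq_abs]
  calc log (t / τ) ^ (-α) * |w τ - w t| ≤ t ^ α * (t - τ) ^ (-α) * (C * (t - τ)) :=
        mul_le_mul (rpow_neg_log_div_le hα0 hτ'.1 hτ'.2.le) hτ (abs_nonneg _) (by positivity)
    _ = t ^ α * C * (t - τ) ^ (1 - α) := by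
        rw [rpow_sub hts, rpow_one, rpow_neg hts.le]
        field_simp

/-- The kernel blows up at `s = t`, so the integration by parts is done on `[a, τ]` and `τ → t`. -/
theorem rpow_neg_log_mul_sub_le_integral_of_isMaxOn (hα0 : 0 < α) (hα1 : α < 1) (ha : 0 < a)
    (hat : a < t) {w : ℝ → ℝ} (hw : ContDiffOn ℝ 1 w (Icc a t)) (hmax : IsMaxOn w (Icc a t) t) :
    log (t / a) ^ (-α) * (w t - w a) ≤ ∫ s in a..t, log (t / s) ^ (-α) * deriv w s := by
  obtain ⟨C, hC⟩ := isCompact_Icc.exists_bound_of_continuousOn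
    (hw.continuousOn_derivWithin (uniqueDiffOn_Icc hat) le_rfl)
  have hlip : ∀ᶠ τ in 𝓝[<] t, |w τ - w t| ≤ C * (t - τ) := by
    filter_upwards [Ioo_mem_nhdsLT hat] with τ hτ
    have := (convex_Icc a t).norm_image_sub_le_of_norm_derivWithin_le
      (hw.differentiableOn one_ne_zero) hC (right_mem_Icc.2 hat.le) (Ioo_subset_Icc_self hτ)
    rwa [Real.norm_eq_abs, Real.norm_eq_abs, abs_of_neg (sub_neg.2 hτ.2), neg_sub] at this
  have hint := (intervalIntegrable_rpow_neg_log_div hα0 hα1 ha hat.le).mul_deriv_of_contDiffOn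
    hat hw
  have hprimitive : Tendsto (fun τ => ∫ s in a..τ, log (t / s) ^ (-α) * deriv w s) (𝓝[<] t)
      (𝓝 (∫ s in a..t, log (t / s) ^ (-α) * deriv w s)) :=
    (continuousOn_primitive_interval' hint left_mem_uIcc t right_mem_uIcc).mono_left
      (nhdsWithin_le_of_mem (mem_of_superset (Ioo_mem_nhdsLT hat)
        (uIcc_of_le hat.le ▸ Ioo_subset_Icc_self)))
  have hboundary := (tendsto_rpow_neg_log_mul_sub_nhdsLT hα0 hα1 (ha.trans hat) hlip).add_const
    (log (t / a) ^ (-α) * (w t - w a))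
  rw [zero_add] at hboundary
  refine le_of_tendsto_of_tendsto hboundary hprimitive ?_
  filter_upwards [Ioo_mem_nhdsLT hat] with τ hτ
  exact integral_rpow_neg_log_mul_deriv_ge hα0 ha hτ.1 hτ.2
    (hw.mono (Icc_subset_Icc_right hτ.2.le)) fun s hs => hmax (Icc_subset_Icc_right hτ.2.le hs)

end HadamardKernel

theorem IsLocalMax.deriv_deriv_nonpos {f : ℝ → ℝ} {a : ℝ} (hmax : IsLocalMax f a)
    (hc : ContinuousAt f a) : deriv (deriv f) a ≤ 0 := by
  by_contra! hpos
  have hconst : f =ᶠ[𝓝 a] fun _ => f a :=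
    ((isLocalMin_of_deriv_deriv_pos hpos hmax.deriv_eq_zero hc).and hmax).mono
      fun _ h => le_antisymm h.2 h.1
  rw [hconst.deriv.deriv_eq] at hpos
  simp at hpos

section CaputoHadamard

variable {n : ℕ} {α t : ℝ} {x : Fin n → ℝ}

theorem caputoHadamardT_pos_of_isMaxOn (hα0 : 0 < α) (hα1 : α < 1) (ht : 1 < t)
    {u : (Fin n → ℝ) → ℝ → ℝ} (hu : ContDiffOn ℝ 1 (u x) (Icc 1 t))
    (hmax : IsMaxOn (u x) (Icc 1 t) t) (hlt : u x 1 < u x t) :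
    0 < caputoHadamardT α u x t := by
  have hΓ : 0 < Gamma (1 - α) := Gamma_pos_of_pos (by linarith)
  have key := rpow_neg_log_mul_sub_le_integral_of_isMaxOn hα0 hα1 one_pos ht hu hmax
  rw [div_one] at key
  exact mul_pos (by positivity)
    ((mul_pos (rpow_pos_of_pos (log_pos ht) _) (sub_pos.2 hlt)).trans_le key)

theorem caputoHadamardT_sub (hα0 : 0 < α) (hα1 : α < 1) (ht : 1 < t)
    {u₁ u₂ : (Fin n → ℝ) → ℝ → ℝ} (hu₁ : ContDiffOn ℝ 1 (u₁ x) (Icc 1 t))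
    (hu₂ : ContDiffOn ℝ 1 (u₂ x) (Icc 1 t)) :
    caputoHadamardT α (u₁ - u₂) x t = caputoHadamardT α u₁ x t - caputoHadamardT α u₂ x t := by
  have hk := intervalIntegrable_rpow_neg_log_div hα0 hα1 one_pos ht.le
  unfold caputoHadamardT
  rw [← mul_sub, ← integral_sub (hk.mul_deriv_of_contDiffOn ht hu₁)
    (hk.mul_deriv_of_contDiffOn ht hu₂)]
  congr 1
  refine integral_congr_ae ?_
  filter_upwards [Measure.ae_ne volume t] with s hst hs
  rw [uIoc_of_le ht.le] at hs
  have hmem : Icc 1 t ∈ 𝓝 s := Icc_mem_nhds hs.1 (lt_of_le_of_ne hs.2 hst)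
  rw [Pi.sub_apply, deriv_sub ((hu₁.contDiffAt hmem).differentiableAt one_ne_zero)
    ((hu₂.contDiffAt hmem).differentiableAt one_ne_zero), mul_sub]

end CaputoHadamard

section Laplacian

variable {n : ℕ} {x : Fin n → ℝ} {t : ℝ}

theorem laplacianX_nonpos_of_isLocalMax {u : (Fin n → ℝ) → ℝ → ℝ}
    (hc : ContinuousAt (fun y => u y t) x) (hmax : IsLocalMax (fun y => u y t) x) :
    laplacianX u x t ≤ 0 := by
  refine Finset.sum_nonpos fun j _ => ?_
  have hupdate : ContinuousAt (Function.update x j) (x j) :=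
    (continuous_const.update j continuous_id).continuousAt
  rw [← Function.update_eq_self j x] at hc hmax
  rw [iteratedDeriv_succ, iteratedDeriv_one]
  exact (hmax.comp_continuous hupdate).deriv_deriv_nonpos (hc.comp hupdate)

theorem laplacianX_sub {u₁ u₂ : (Fin n → ℝ) → ℝ → ℝ}
    (hu₁ : ContDiffAt ℝ 2 (fun y => u₁ y t) x) (hu₂ : ContDiffAt ℝ 2 (fun y => u₂ y t) x) :
    laplacianX (u₁ - u₂) x t = laplacianX u₁ x t - laplacianX u₂ x t := by
  unfold laplacianX
  rw [← Finset.sum_sub_distrib]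
  refine Finset.sum_congr rfl fun j _ => ?_
  have hslice : ∀ {v : (Fin n → ℝ) → ℝ → ℝ}, ContDiffAt ℝ 2 (fun y => v y t) x →
      ContDiffAt ℝ 2 (fun z => v (Function.update x j z) t) (x j) := fun hv =>
    ContDiffAt.comp (x j) (by rwa [Function.update_eq_self]) (contDiff_update 2 x j).contDiffAt
  rw [← iteratedDerivWithin_univ, ← iteratedDerivWithin_univ, ← iteratedDerivWithin_univ]
  exact iteratedDerivWithin_sub (mem_univ _) uniqueDiffOn_univ (hslice hu₁).contDiffWithinAt
    (hslice hu₂).contDiffWithinAt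

end Laplacian

namespace IsSolutionNonlinearCH

variable {n : ℕ} {G : Set (Fin n → ℝ)} {T ν α : ℝ} {F : (Fin n → ℝ) → ℝ → ℝ → ℝ}
  {φ : (Fin n → ℝ) → ℝ} {ψ : (Fin n → ℝ) → ℝ → ℝ} {u₁ u₂ : (Fin n → ℝ) → ℝ → ℝ}

theorem le_of_isMaxOn (hGopen : IsOpen G) (hν : 0 ≤ ν) (hα0 : 0 < α) (hα1 : α < 1)
    (hFmono : ∀ x t, ∀ v w : ℝ, v ≤ w → F x t w ≤ F x t v)
    (h₁ : IsSolutionNonlinearCH G T ν α u₁ F φ ψ) (h₂ : IsSolutionNonlinearCH G T ν α u₂ F φ ψ)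
    {x₀ : Fin n → ℝ} {t₀ : ℝ} (hx₀ : x₀ ∈ G) (ht₀ : t₀ ∈ Ioc 1 T)
    (hmax : IsMaxOn (fun p => u₁ p.1 p.2 - u₂ p.1 p.2) (closure G ×ˢ Icc 1 T) (x₀, t₀)) :
    u₁ x₀ t₀ ≤ u₂ x₀ t₀ := by
  obtain ⟨-, h₁t, h₁x, h₁eq, h₁init, -⟩ := h₁
  obtain ⟨-, h₂t, h₂x, h₂eq, h₂init, -⟩ := h₂
  by_contra! hlt
  have hG : G ∈ 𝓝 x₀ := hGopen.mem_nhds hx₀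
  have hcap : 0 < caputoHadamardT α (u₁ - u₂) x₀ t₀ := by
    refine caputoHadamardT_pos_of_isMaxOn hα0 hα1 ht₀.1
      (((h₁t x₀ hx₀).sub (h₂t x₀ hx₀)).mono (Icc_subset_Icc_right ht₀.2))
      (fun s hs => isMaxOn_iff.1 hmax (x₀, s) ⟨subset_closure hx₀, hs.1, hs.2.trans ht₀.2⟩) ?_
    simp only [Pi.sub_apply, h₁init x₀ (subset_closure hx₀), h₂init x₀ (subset_closure hx₀),
      sub_self, sub_pos, hlt]
  have hlap : laplacianX (u₁ - u₂) x₀ t₀ ≤ 0 :=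
    laplacianX_nonpos_of_isLocalMax (((h₁x t₀ ht₀).sub (h₂x t₀ ht₀)).continuousOn.continuousAt hG)
      (mem_of_superset hG fun y hy =>
        isMaxOn_iff.1 hmax (y, t₀) ⟨subset_closure hy, Ioc_subset_Icc_self ht₀⟩)
  rw [caputoHadamardT_sub hα0 hα1 ht₀.1 ((h₁t x₀ hx₀).mono (Icc_subset_Icc_right ht₀.2))
    ((h₂t x₀ hx₀).mono (Icc_subset_Icc_right ht₀.2)), h₁eq x₀ hx₀ t₀ ht₀, h₂eq x₀ hx₀ t₀ ht₀]
    at hcap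
  rw [laplacianX_sub ((h₁x t₀ ht₀).contDiffAt hG) ((h₂x t₀ ht₀).contDiffAt hG)] at hlap
  linarith [mul_nonpos_of_nonneg_of_nonpos hν hlap, hFmono x₀ t₀ _ _ hlt.le]

theorem le (hGopen : IsOpen G) (hGbdd : Bornology.IsBounded G) (hν : 0 ≤ ν) (hα0 : 0 < α)
    (hα1 : α < 1) (hFmono : ∀ x t, ∀ v w : ℝ, v ≤ w → F x t w ≤ F x t v)
    (h₁ : IsSolutionNonlinearCH G T ν α u₁ F φ ψ) (h₂ : IsSolutionNonlinearCH G T ν α u₂ F φ ψ) :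
    ∀ x ∈ closure G, ∀ t ∈ Icc 1 T, u₁ x t ≤ u₂ x t := by
  have ⟨h₁c, _, _, _, h₁init, h₁bdry⟩ := h₁
  have ⟨h₂c, _, _, _, h₂init, h₂bdry⟩ := h₂
  intro x hx t ht
  obtain ⟨⟨x₀, t₀⟩, ⟨hx₀, ht₀⟩, hmax⟩ :=
    (hGbdd.isCompact_closure.prod isCompact_Icc).exists_isMaxOn
      (f := fun p => u₁ p.1 p.2 - u₂ p.1 p.2) ⟨(x, t), hx, ht⟩ (h₁c.sub h₂c)
  suffices u₁ x₀ t₀ - u₂ x₀ t₀ ≤ 0 by linarith [isMaxOn_iff.1 hmax (x, t) ⟨hx, ht⟩]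
  by_cases hfr : x₀ ∈ frontier G
  · rw [h₁bdry x₀ hfr t₀ ht₀, h₂bdry x₀ hfr t₀ ht₀, sub_self]
  rcases ht₀.1.eq_or_lt with rfl | h1t₀
  · rw [h₁init x₀ hx₀, h₂init x₀ hx₀, sub_self]
  have hx₀G : x₀ ∈ G := by
    by_contra h
    exact hfr ⟨hx₀, by rwa [hGopen.interior_eq]⟩
  exact sub_nonpos.2 (le_of_isMaxOn hGopen hν hα0 hα1 hFmono h₁ h₂ hx₀G ⟨h1t₀, ht₀.2⟩ hmax)

end IsSolutionNonlinearCH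

theorem uniqueness_nonlinear_caputoHadamard_diffusion_general
    {n : ℕ} (G : Set (Fin n → ℝ)) (hGopen : IsOpen G)
    (hGbdd : Bornology.IsBounded G)
    (T ν α : ℝ) (hν : 0 < ν) (hα0 : 0 < α) (hα1 : α < 1)
    (F : (Fin n → ℝ) → ℝ → ℝ → ℝ)
    (hFmono : ∀ x t, ∀ v w : ℝ, v ≤ w → F x t w ≤ F x t v)
    (φ : (Fin n → ℝ) → ℝ) (ψ : (Fin n → ℝ) → ℝ → ℝ)
    (u₁ u₂ : (Fin n → ℝ) → ℝ → ℝ)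
    (h₁ : IsSolutionNonlinearCH G T ν α u₁ F φ ψ)
    (h₂ : IsSolutionNonlinearCH G T ν α u₂ F φ ψ) :
    ∀ x ∈ closure G, ∀ t ∈ Set.Icc (1:ℝ) T, u₁ x t = u₂ x t := fun x hx t ht =>
  le_antisymm (h₁.le hGopen hGbdd hν.le hα0 hα1 hFmono h₂ x hx t ht)
    (h₂.le hGopen hGbdd hν.le hα0 hα1 hFmono h₁ x hx t ht)

theorem uniqueness_nonlinear_caputoHadamard_diffusion
    {n : ℕ} (G : Set (Fin n → ℝ)) (hGopen : IsOpen G) (hGne : G.Nonempty)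
    (hGbdd : Bornology.IsBounded G)
    (T ν α : ℝ) (hT : 1 < T) (hν : 0 < ν) (hα0 : 0 < α) (hα1 : α < 1)
    (F : (Fin n → ℝ) → ℝ → ℝ → ℝ)
    (hFc : Continuous fun p : (Fin n → ℝ) × ℝ × ℝ => F p.1 p.2.1 p.2.2)
    (hFsmooth : ∀ x t, ContDiff ℝ 1 (F x t))
    (hFmono : ∀ x t, ∀ v w : ℝ, v ≤ w → F x t w ≤ F x t v)
    (φ : (Fin n → ℝ) → ℝ) (ψ : (Fin n → ℝ) → ℝ → ℝ)
    (u₁ u₂ : (Fin n → ℝ) → ℝ → ℝ)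
    (h₁ : IsSolutionNonlinearCH G T ν α u₁ F φ ψ)
    (h₂ : IsSolutionNonlinearCH G T ν α u₂ F φ ψ) :
    ∀ x ∈ closure G, ∀ t ∈ Set.Icc (1:ℝ) T, u₁ x t = u₂ x t :=
  uniqueness_nonlinear_caputoHadamard_diffusion_general G hGopen hGbdd T ν α hν hα0 hα1 F hFmono φ ψ
    u₁ u₂ h₁ h₂
end
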